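/- Let K be a group acting linearly on a complex vector space V, and suppose the induced representation of K on the polynomial algebra ℂ[V] is multiplicity free (each irreducible K-representation occurs at most once). Let W ⊆ V be a K-stable subspace with a K-stable complement, so restriction of polynomials gives a K-equivariant surjection ℂ[V] → ℂ[W]. If an irreducible K-subrepresentation U of ℂ[W] consists of homogeneous polynomials of degree d, and U also occurs in ℂ[V], then under the identification ℂ[W] ⊆ ℂ[V] the copy of U in ℂ[V] also consists of homogeneous polynomials of degree d in the W-variables only. -/

import Mathlib

open MvPolynomial

/-!
Restriction to `W` (evaluating the `W'`-variables at `0`) is a left inverse of the inclusion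
`j = rename Sum.inl : ℂ[W] → ℂ[V]`, and `K` maps the image of `j` into itself because it preserves
the span of the `W`-variables; together with the equivariance of restriction this makes `j`
itself `K`-equivariant. Hence `j(U)` is an irreducible `K`-stable copy of `U` in `ℂ[V]`, and so is
the given copy, which is therefore equal to `j(U)` by multiplicity freeness.
-/

section Equivariance

variable {K R M N P : Type*} [Semiring R] [AddCommMonoid M] [Module R M]
  [AddCommMonoid N] [Module R N] [AddCommMonoid P] [Module R P]
  {σ : K → M → M} {τ : K → N → N} {υ : K → P → P}

def Submodule.IsInvariantUnder (σ : K → M → M) (A : Submodule R M) : Prop :=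
  ∀ k p, p ∈ A → σ k p ∈ A

def Submodule.IsIrreducibleUnder (σ : K → M → M) (A : Submodule R M) : Prop :=
  ∀ W ≤ A, W.IsInvariantUnder σ → W = ⊥ ∨ W = A

def LinearEquiv.IsEquivariant (σ : K → M → M) (τ : K → N → N) {A : Submodule R M}
    {B : Submodule R N} (hA : A.IsInvariantUnder σ) (e : A ≃ₗ[R] B) : Prop :=
  ∀ k p (hp : p ∈ A), (e ⟨σ k p, hA k p hp⟩ : N) = τ k (e ⟨p, hp⟩)

variable {A : Submodule R M} {B : Submodule R N} {C : Submodule R P}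
  {hA : A.IsInvariantUnder σ} {e : A ≃ₗ[R] B}

theorem LinearEquiv.IsEquivariant.symm (he : e.IsEquivariant σ τ hA)
    (hB : B.IsInvariantUnder τ) : e.symm.IsEquivariant τ σ hB := by
  intro k p hp
  set x := e.symm ⟨p, hp⟩
  have hx : e ⟨σ k x, hA k x x.2⟩ = ⟨τ k p, hB k p hp⟩ :=
    Subtype.ext ((he k x x.2).trans (by rw [LinearEquiv.apply_symm_apply]))
  rw [← hx, LinearEquiv.symm_apply_apply]

theorem LinearEquiv.IsEquivariant.trans (he : e.IsEquivariant σ τ hA)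
    {hB : B.IsInvariantUnder τ} {f : B ≃ₗ[R] C} (hf : f.IsEquivariant τ υ hB) :
    (e.trans f).IsEquivariant σ υ hA := by
  intro k p hp
  have : e ⟨σ k p, hA k p hp⟩ = ⟨τ k (e ⟨p, hp⟩), hB _ _ (e ⟨p, hp⟩).2⟩ :=
    Subtype.ext (he k p hp)
  simp only [LinearEquiv.trans_apply, this]
  exact hf _ _ _

theorem Submodule.IsIrreducibleUnder.of_linearEquiv (hB : B.IsIrreducibleUnder τ)
    (he : e.IsEquivariant σ τ hA) : A.IsIrreducibleUnder σ := by
  intro W hWA hW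
  set Φ : Submodule R N := ((W.comap A.subtype).map e.toLinearMap).map B.subtype
  have mem_Φ : ∀ x : A, (e x : N) ∈ Φ ↔ (x : M) ∈ W := by
    intro x
    simp [Φ]
  have hΦB : Φ ≤ B := by
    rintro _ ⟨y, -, rfl⟩
    exact y.2
  have hΦ : Φ.IsInvariantUnder τ := by
    rintro k _ ⟨_, ⟨x, hxW, rfl⟩, rfl⟩
    have hx := he k x x.2
    simp only [Subtype.coe_eta] at hx
    change τ k (e x : N) ∈ Φ
    rw [← hx]
    exact (mem_Φ _).mpr (hW k x hxW)
  rcases hB Φ hΦB hΦ with hΦ_bot | hΦ_eq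
  · refine Or.inl (eq_bot_iff.mpr fun p hp => ?_)
    have h0 : e ⟨p, hWA hp⟩ = 0 := by
      simpa [hΦ_bot] using (mem_Φ ⟨p, hWA hp⟩).mpr hp
    simpa using congrArg Subtype.val (e.map_eq_zero_iff.mp h0)
  · refine Or.inr (le_antisymm hWA fun p hp => ?_)
    exact (mem_Φ ⟨p, hp⟩).mp (by rw [hΦ_eq]; exact (e ⟨p, hp⟩).2)

theorem Submodule.IsInvariantUnder.map {f : M →ₗ[R] N}
    (hf : ∀ k, Function.Semiconj f (σ k) (τ k)) (hA : A.IsInvariantUnder σ) : (A.map f).IsInvariantUnder τ := by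
  rintro k _ ⟨p, hp, rfl⟩
  exact ⟨σ k p, hA k p hp, hf k p⟩

theorem Submodule.isEquivariant_equivMapOfInjective {f : M →ₗ[R] N}
    (hf : ∀ k, Function.Semiconj f (σ k) (τ k)) (hinj : Function.Injective f) :
    (A.equivMapOfInjective f hinj).IsEquivariant σ τ hA :=
  fun k p _ => hf k p

end Equivariance

theorem Function.Semiconj.of_leftInverse {α β : Type*} {j : α → β} {r : β → α}
    (hrj : Function.LeftInverse r j) {φ : β → β} {ψ : α → α}
    (hφ : Set.MapsTo φ (Set.range j) (Set.range j)) (hr : Function.Semiconj r φ ψ) :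
    Function.Semiconj j ψ φ := by
  intro a
  obtain ⟨b, hb⟩ := hφ (Set.mem_range_self a)
  calc j (ψ a) = j (ψ (r (j a))) := by rw [hrj]
    _ = j (r (φ (j a))) := by rw [hr]
    _ = φ (j a) := by rw [← hb, hrj]

namespace MvPolynomial

variable {R ι ι' : Type*} [CommSemiring R]

theorem aeval_sumElim_X_zero_rename_inl (p : MvPolynomial ι R) :
    aeval (Sum.elim X fun _ : ι' => (0 : MvPolynomial ι R)) (rename Sum.inl p) = p := by
  rw [aeval_rename, Sum.elim_comp_inl, aeval_X_left_apply]

theorem span_X_le_range_rename {σ τ : Type*} (f : σ → τ) :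
    Submodule.span R (Set.range fun i => (X (f i) : MvPolynomial τ R)) ≤
      Subalgebra.toSubmodule (rename f).range := by
  rw [Submodule.span_le]
  rintro _ ⟨i, rfl⟩
  exact ⟨X i, rename_X f i⟩

theorem mapsTo_range_rename {σ τ F : Type*} [FunLike F (MvPolynomial τ R) (MvPolynomial τ R)]
    [AlgHomClass F R (MvPolynomial τ R) (MvPolynomial τ R)] {f : σ → τ} (φ : F)
    (hφ : ∀ i, φ (X (f i)) ∈ (rename f).range) :
    Set.MapsTo φ (Set.range (rename f)) (Set.range (rename f)) := by
  rintro _ ⟨p, rfl⟩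
  have h : (AlgHomClass.toAlgHom φ).comp (rename f) = aeval fun i => φ (X (f i)) := by
    ext i; simp
  have hle : (aeval fun i => φ (X (f i))).range ≤ (rename f).range := by
    rw [aeval_range, Algebra.adjoin_le_iff]
    rintro _ ⟨i, rfl⟩
    exact hφ i
  exact hle ⟨p, (congrArg (· p) h).symm⟩

end MvPolynomial


open MvPolynomial

theorem copy_in_bigger_polynomial_algebra_is_homogeneous_general
    {K : Type*} [Group K] {ι ι' : Type*}
    (ρ : K →* (MvPolynomial (ι ⊕ ι') ℂ ≃ₐ[ℂ] MvPolynomial (ι ⊕ ι') ℂ))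
    (ρW : K →* (MvPolynomial ι ℂ ≃ₐ[ℂ] MvPolynomial ι ℂ))
    -- `K` acts linearly, preserving the span of the `W`-variables …
    (hlinW : ∀ (k : K) (i : ι), ρ k (X (Sum.inl i)) ∈
      Submodule.span ℂ (Set.range fun i' : ι => (X (Sum.inl i') : MvPolynomial (ι ⊕ ι') ℂ)))
    -- restriction `ℂ[V] → ℂ[W]` is `K`-equivariant
    (hres : ∀ (k : K) (p : MvPolynomial (ι ⊕ ι') ℂ),
      aeval (Sum.elim X fun _ : ι' => (0 : MvPolynomial ι ℂ)) (ρ k p) =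
        ρW k (aeval (Sum.elim X fun _ : ι' => (0 : MvPolynomial ι ℂ)) p))
    -- the representation of `K` on `ℂ[V]` is multiplicity free
    (hmf : ∀ U₁ U₂ : Submodule ℂ (MvPolynomial (ι ⊕ ι') ℂ),
      ∀ (h1 : ∀ (k : K) p, p ∈ U₁ → ρ k p ∈ U₁) (h2 : ∀ (k : K) p, p ∈ U₂ → ρ k p ∈ U₂),
      (∀ W ≤ U₁, (∀ (k : K) p, p ∈ W → ρ k p ∈ W) → W = ⊥ ∨ W = U₁) →
      (∀ W ≤ U₂, (∀ (k : K) p, p ∈ W → ρ k p ∈ W) → W = ⊥ ∨ W = U₂) →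
      U₁ ≠ ⊥ →
      (∃ e : U₁ ≃ₗ[ℂ] U₂, ∀ (k : K) p (hp : p ∈ U₁),
        (e ⟨ρ k p, h1 k p hp⟩ : MvPolynomial (ι ⊕ ι') ℂ) = ρ k (e ⟨p, hp⟩)) →
      U₁ = U₂)
    -- `U ⊆ ℂ[W]` irreducible invariant, homogeneous of degree `d`
    (U : Submodule ℂ (MvPolynomial ι ℂ)) (d : ℕ)
    (hUinv : ∀ (k : K) p, p ∈ U → ρW k p ∈ U) (hUne : U ≠ ⊥)
    (hUirr : ∀ W ≤ U, (∀ (k : K) p, p ∈ W → ρW k p ∈ W) → W = ⊥ ∨ W = U)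
    (hUhom : ∀ p ∈ U, MvPolynomial.IsHomogeneous p d)
    -- a copy of `U` occurring in `ℂ[V]`
    (Ubig : Submodule ℂ (MvPolynomial (ι ⊕ ι') ℂ))
    (hUbiginv : ∀ (k : K) p, p ∈ Ubig → ρ k p ∈ Ubig)
    (e : Ubig ≃ₗ[ℂ] U)
    (he : ∀ (k : K) p (hp : p ∈ Ubig),
      (e ⟨ρ k p, hUbiginv k p hp⟩ : MvPolynomial ι ℂ) = ρW k (e ⟨p, hp⟩)) :
    ∀ p ∈ Ubig, MvPolynomial.IsHomogeneous p d ∧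
      p ∈ Set.range (rename (Sum.inl : ι → ι ⊕ ι')) := by
  set j := (rename Sum.inl : MvPolynomial ι ℂ →ₐ[ℂ] MvPolynomial (ι ⊕ ι') ℂ)
  have hj : ∀ k, Function.Semiconj j (ρW k) (ρ k) := fun k =>
    .of_leftInverse aeval_sumElim_X_zero_rename_inl
      (mapsTo_range_rename (ρ k) fun i => span_X_le_range_rename _ (hlinW k i)) (hres k)
  have hjinj : Function.Injective j := rename_injective _ Sum.inl_injective
  set Ucopy := U.map j.toLinearMap
  have hUcopy : Ucopy.IsInvariantUnder fun k => ρ k := Submodule.IsInvariantUnder.map hj hUinv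
  have hjU : (U.equivMapOfInjective j.toLinearMap hjinj).IsEquivariant (fun k => ρW k)
      (fun k => ρ k) hUinv := Submodule.isEquivariant_equivMapOfInjective hj hjinj
  have hUirr' : U.IsIrreducibleUnder fun k => ρW k := hUirr
  have he' : e.IsEquivariant (fun k => ρ k) (fun k => ρW k) hUbiginv := he
  have hUcopy_ne : Ucopy ≠ ⊥ := fun h =>
    hUne (Submodule.map_injective_of_injective hjinj (h.trans (Submodule.map_bot _).symm))
  have hUcopy_eq : Ucopy = Ubig :=
    hmf Ucopy Ubig hUcopy hUbiginv (hUirr'.of_linearEquiv (hjU.symm hUcopy))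
      (hUirr'.of_linearEquiv he') hUcopy_ne ⟨_, (hjU.symm hUcopy).trans (he'.symm hUinv)⟩
  rintro _ hp
  obtain ⟨q, hq, rfl⟩ := hUcopy_eq ▸ hp
  exact ⟨(hUhom q hq).rename_isHomogeneous, q, rfl⟩

/-- Suppose a group `K` acts linearly on `V = W ⊕ W'` (with `W`-coordinates `ι`
and `W'`-coordinates `ι'`), preserving both summands, so that restriction of
polynomials (evaluation of the `W'`-variables at `0`) is a `K`-equivariant
surjection `ℂ[V] → ℂ[W]`.  If the representation of `K` on `ℂ[V]` is
multiplicity free and `U ⊆ ℂ[W]` is an irreducible `K`-subrepresentation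
consisting of homogeneous polynomials of degree `d` which also occurs in
`ℂ[V]`, then any copy of `U` in `ℂ[V]` consists of homogeneous polynomials of
degree `d` in the `W`-variables only. -/
theorem copy_in_bigger_polynomial_algebra_is_homogeneous
    {K : Type*} [Group K] {ι ι' : Type*} [Finite ι] [Finite ι']
    (ρ : K →* (MvPolynomial (ι ⊕ ι') ℂ ≃ₐ[ℂ] MvPolynomial (ι ⊕ ι') ℂ))
    (ρW : K →* (MvPolynomial ι ℂ ≃ₐ[ℂ] MvPolynomial ι ℂ))
    -- `K` acts linearly, preserving the span of the `W`-variables …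
    (hlinW : ∀ (k : K) (i : ι), ρ k (X (Sum.inl i)) ∈
      Submodule.span ℂ (Set.range fun i' : ι => (X (Sum.inl i') : MvPolynomial (ι ⊕ ι') ℂ)))
    -- … and the span of the `W'`-variables
    (hlinW' : ∀ (k : K) (j : ι'), ρ k (X (Sum.inr j)) ∈
      Submodule.span ℂ (Set.range fun j' : ι' => (X (Sum.inr j') : MvPolynomial (ι ⊕ ι') ℂ)))
    -- restriction `ℂ[V] → ℂ[W]` is `K`-equivariant
    (hres : ∀ (k : K) (p : MvPolynomial (ι ⊕ ι') ℂ),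
      aeval (Sum.elim X fun _ : ι' => (0 : MvPolynomial ι ℂ)) (ρ k p) =
        ρW k (aeval (Sum.elim X fun _ : ι' => (0 : MvPolynomial ι ℂ)) p))
    -- the representation of `K` on `ℂ[V]` is multiplicity free
    (hmf : ∀ U₁ U₂ : Submodule ℂ (MvPolynomial (ι ⊕ ι') ℂ),
      ∀ (h1 : ∀ (k : K) p, p ∈ U₁ → ρ k p ∈ U₁) (h2 : ∀ (k : K) p, p ∈ U₂ → ρ k p ∈ U₂),
      (∀ W ≤ U₁, (∀ (k : K) p, p ∈ W → ρ k p ∈ W) → W = ⊥ ∨ W = U₁) →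
      (∀ W ≤ U₂, (∀ (k : K) p, p ∈ W → ρ k p ∈ W) → W = ⊥ ∨ W = U₂) →
      U₁ ≠ ⊥ →
      (∃ e : U₁ ≃ₗ[ℂ] U₂, ∀ (k : K) p (hp : p ∈ U₁),
        (e ⟨ρ k p, h1 k p hp⟩ : MvPolynomial (ι ⊕ ι') ℂ) = ρ k (e ⟨p, hp⟩)) →
      U₁ = U₂)
    -- `U ⊆ ℂ[W]` irreducible invariant, homogeneous of degree `d`
    (U : Submodule ℂ (MvPolynomial ι ℂ)) (d : ℕ)
    (hUinv : ∀ (k : K) p, p ∈ U → ρW k p ∈ U) (hUne : U ≠ ⊥)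
    (hUirr : ∀ W ≤ U, (∀ (k : K) p, p ∈ W → ρW k p ∈ W) → W = ⊥ ∨ W = U)
    (hUhom : ∀ p ∈ U, MvPolynomial.IsHomogeneous p d)
    -- a copy of `U` occurring in `ℂ[V]`
    (Ubig : Submodule ℂ (MvPolynomial (ι ⊕ ι') ℂ))
    (hUbiginv : ∀ (k : K) p, p ∈ Ubig → ρ k p ∈ Ubig)
    (e : Ubig ≃ₗ[ℂ] U)
    (he : ∀ (k : K) p (hp : p ∈ Ubig),
      (e ⟨ρ k p, hUbiginv k p hp⟩ : MvPolynomial ι ℂ) = ρW k (e ⟨p, hp⟩)) :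
    ∀ p ∈ Ubig, MvPolynomial.IsHomogeneous p d ∧
      p ∈ Set.range (rename (Sum.inl : ι → ι ⊕ ι')) :=
  copy_in_bigger_polynomial_algebra_is_homogeneous_general ρ ρW hlinW hres hmf U d hUinv hUne hUirr
    hUhom Ubig hUbiginv e he
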